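/- arXiv:1603.06252 — 2 statements merged into one kernel-verified Lean document; each statement's English description precedes it below -/
import Mathlib

section
/- Consequently, for a finite metric space (X, d) with minimum spanning tree T and a subset G ⊆ X, G is ε-connected if and only if the maximum weight edge of the minimal subtree of T spanning G is at most ε (where an empty or singleton G is ε-connected for every ε ≥ 0). -/
/-!
If every tree-path edge between points of `G` has weight at most `ε`, the tree paths themselves
are `ε`-chains. Conversely, let `s(a, b)` be an edge on the tree path from `p` to `q`. Deleting it
separates `p` from `q`, so any `ε`-chain from `p` to `q` has a step `x, y` joining the two sides.
Exchanging `s(a, b)` for `s(x, y)` gives another spanning tree, so minimality of `T` forces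
`w s(a, b) ≤ d x y ≤ ε` (the cut property of minimum spanning trees).
-/

namespace SimpleGraph

variable {V : Type*} {G : SimpleGraph V}

theorem Walk.reflTransGen_of_forall_mem_edges {r : V → V → Prop} {u v : V} (W : G.Walk u v)
    (h : ∀ x y, s(x, y) ∈ W.edges → r x y) : Relation.ReflTransGen r u v := by
  induction W with
  | nil => exact .refl
  | cons hadj W ih => exact .head (h _ _ (by simp)) (ih fun x y hxy ↦ h x y (by simp [hxy]))

theorem exists_not_reachable_of_reflTransGen {r : V → V → Prop} {u v : V}
    (h : Relation.ReflTransGen r u v) (huv : ¬ G.Reachable u v) :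
    ∃ x y, r x y ∧ ¬ G.Reachable x y := by
  by_contra! hall
  exact huv <| Relation.reflTransGen_le_of_equivalence_of_le G.reachable_is_equivalence hall u v h

theorem IsAcyclic.not_reachable_deleteEdges_of_mem_edges (hG : G.IsAcyclic) {u v : V}
    {W : G.Walk u v} (hW : W.IsPath) {e : Sym2 V} (he : e ∈ W.edges) :
    ¬ (G.deleteEdges {e}).Reachable u v := by
  classical
  rintro ⟨c⟩
  have hW' : W = (c.mapLe (deleteEdges_le _)).toPath.1 :=
    congrArg Subtype.val ((hG.subsingleton_path u v).elim ⟨W, hW⟩ _)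
  rw [hW'] at he
  have hec : e ∈ c.edges := by simpa using Walk.edges_toPath_subset_edges _ he
  simpa [edgeSet_deleteEdges] using c.edges_subset_edgeSet hec

theorem Preconnected.reachable_deleteEdges_or (hG : G.Preconnected) (a b v : V) :
    (G.deleteEdges {s(a, b)}).Reachable v a ∨ (G.deleteEdges {s(a, b)}).Reachable v b := by
  refine Relation.ReflTransGen.head_induction_on ((reachable_iff_reflTransGen v a).mp (hG v a))
    (.inl .rfl) fun {v c} hvc _ ih ↦ ?_
  by_cases hvc' : s(v, c) = s(a, b)
  · rcases Sym2.eq_iff.mp hvc' with ⟨rfl, -⟩ | ⟨rfl, -⟩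
    · exact .inl .rfl
    · exact .inr .rfl
  · have hD : (G.deleteEdges {s(a, b)}).Adj v c := by simpa [hvc'] using hvc
    exact ih.imp hD.reachable.trans hD.reachable.trans

theorem IsTree.deleteEdges_sup_edge_of_not_reachable {a b x y : V} (hG : G.IsTree)
    (hxy : ¬ (G.deleteEdges {s(a, b)}).Reachable x y) :
    (G.deleteEdges {s(a, b)} ⊔ edge x y).IsTree := by
  set D := G.deleteEdges {s(a, b)}
  have side := hG.connected.preconnected.reachable_deleteEdges_or a b
  have hD : D ≤ D ⊔ edge x y := le_sup_left
  have hne : x ≠ y := by rintro rfl; exact hxy .rfl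
  have hxy' : (D ⊔ edge x y).Reachable x y := Adj.reachable (by simp [edge_adj, hne])
  have hab : (D ⊔ edge x y).Reachable a b := by
    rcases side x with hx | hx <;> rcases side y with hy | hy
    · exact absurd (hx.trans hy.symm) hxy
    · exact (hx.mono hD).symm.trans (hxy'.trans (hy.mono hD))
    · exact (hy.mono hD).symm.trans (hxy'.symm.trans (hx.mono hD))
    · exact absurd (hx.trans hy.symm) hxy
  refine ⟨(connected_iff_exists_forall_reachable _).mpr ⟨a, fun v ↦ ?_⟩, ?_⟩
  · rcases side v with hv | hv
    · exact (hv.mono hD).symm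
    · exact hab.trans (hv.mono hD).symm
  · exact hG.isAcyclic.anti (deleteEdges_le _) |>.sup_edge_of_not_reachable hxy

section MinSpanningTree

variable [Fintype V] {β : Type*} [AddCommMonoid β] [PartialOrder β] [IsOrderedCancelAddMonoid β]

def IsMinSpanningTree (w : Sym2 V → β) (T : SimpleGraph V) : Prop :=
  T.IsTree ∧ ∀ T' : SimpleGraph V, T'.IsTree →
    ∑ e ∈ (Set.toFinite T.edgeSet).toFinset, w e ≤ ∑ e ∈ (Set.toFinite T'.edgeSet).toFinset, w e

theorem IsMinSpanningTree.weight_le_of_not_reachable_deleteEdges {w : Sym2 V → β}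
    {T : SimpleGraph V} (hT : IsMinSpanningTree w T) {a b x y : V} (hab : T.Adj a b)
    (hxy : ¬ (T.deleteEdges {s(a, b)}).Reachable x y) : w s(a, b) ≤ w s(x, y) := by
  classical
  have hne : x ≠ y := by rintro rfl; exact hxy .rfl
  set F := (Set.toFinite T.edgeSet).toFinset
  have hxyF : s(x, y) ∉ F.erase s(a, b) := fun h ↦ hxy <| Adj.reachable <| by
    simpa [F, edgeSet_deleteEdges, and_comm] using h
  have hedges : (Set.toFinite (T.deleteEdges {s(a, b)} ⊔ edge x y).edgeSet).toFinset =
      insert s(x, y) (F.erase s(a, b)) := by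
    ext e
    simp [F, edgeSet_deleteEdges, edgeSet_edge_of_ne hne, and_comm]
  have hmin := hT.2 _ (hT.1.deleteEdges_sup_edge_of_not_reachable hxy)
  rw [hedges, Finset.sum_insert hxyF,
    ← Finset.add_sum_erase F w (a := s(a, b)) (by simpa [F] using hab)] at hmin
  exact le_of_add_le_add_right hmin

end MinSpanningTree

end SimpleGraph

open SimpleGraph

theorem mst_subtree_connectivity_general {X : Type*} [Fintype X] [MetricSpace X]
    (T : SimpleGraph X) (w : Sym2 X → ℝ) (hw : ∀ x y : X, w s(x, y) = dist x y)
    (hT : T.IsTree)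
    (hmin : ∀ T' : SimpleGraph X, T'.IsTree →
      ∑ e ∈ (Set.toFinite T.edgeSet).toFinset, w e ≤
        ∑ e ∈ (Set.toFinite T'.edgeSet).toFinset, w e)
    (ε : ℝ) (G : Set X) :
    (∀ p ∈ G, ∀ q ∈ G, Relation.ReflTransGen (fun x y : X => dist x y ≤ ε) p q) ↔
      ∀ p ∈ G, ∀ q ∈ G, ∀ (W : T.Walk p q), W.IsPath → ∀ e ∈ W.edges, w e ≤ ε := by
  constructor
  · intro hchain p hp q hq W hW e he
    induction e using Sym2.ind with | _ a b
    have hpq := hT.isAcyclic.not_reachable_deleteEdges_of_mem_edges hW he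
    obtain ⟨x, y, hxy, hcut⟩ := exists_not_reachable_of_reflTransGen (hchain p hp q hq) hpq
    calc w s(a, b) ≤ w s(x, y) :=
          IsMinSpanningTree.weight_le_of_not_reachable_deleteEdges ⟨hT, hmin⟩
            (W.adj_of_mem_edges he) hcut
      _ = dist x y := hw x y
      _ ≤ ε := hxy
  · intro hedges p hp q hq
    obtain ⟨W, hW⟩ := (hT.existsUnique_path p q).exists
    exact W.reflTransGen_of_forall_mem_edges fun x y hxy ↦ hw x y ▸ hedges p hp q hq W hW _ hxy

theorem mst_subtree_connectivity {X : Type*} [Fintype X] [DecidableEq X] [MetricSpace X]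
    [Nonempty X]
    (T : SimpleGraph X) (w : Sym2 X → ℝ) (hw : ∀ x y : X, w s(x, y) = dist x y)
    (hT : T.IsTree)
    (hmin : ∀ T' : SimpleGraph X, T'.IsTree →
      ∑ e ∈ (Set.toFinite T.edgeSet).toFinset, w e ≤
        ∑ e ∈ (Set.toFinite T'.edgeSet).toFinset, w e)
    (ε : ℝ) (hε : 0 ≤ ε) (G : Set X) :
    (∀ p ∈ G, ∀ q ∈ G, Relation.ReflTransGen (fun x y : X => dist x y ≤ ε) p q) ↔
      ∀ p ∈ G, ∀ q ∈ G, ∀ (W : T.Walk p q), W.IsPath → ∀ e ∈ W.edges, w e ≤ ε :=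
  mst_subtree_connectivity_general T w hw hT hmin ε G
end

section
/- In the setting of maximal ε-groups ending at a common time (groups of the form Grp(a, s, z)), the nonempty groups among any finite collection G₁, …, G_m all ending at time z form a laminar family: for any two of them, either they are disjoint or one is contained in the other. -/
def EpsConnected {X : Type*} (d : ℝ → X → X → ℝ) (ε t : ℝ) (a b : X) : Prop :=
  Relation.ReflTransGen (fun x y => d t x y ≤ ε) a b

def EpsGrp {X : Type*} (d : ℝ → X → X → ℝ) (ε : ℝ) (a : X) (s z : ℝ) : Set X :=
  {x | ∀ t ∈ Set.Icc s z, EpsConnected d ε t x a}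

section

variable {X : Type*} {d : ℝ → X → X → ℝ} {ε : ℝ}

lemma EpsConnected.symm (hsymm : ∀ t a b, d t a b = d t b a) {t : ℝ} {a b : X}
    (h : EpsConnected d ε t a b) : EpsConnected d ε t b a :=
  have : Std.Symm fun x y => d t x y ≤ ε := ⟨fun x y hxy => (hsymm t y x).trans_le hxy⟩
  Std.Symm.symm (r := Relation.ReflTransGen _) _ _ h

lemma EpsConnected.trans {t : ℝ} {a b c : X} (hab : EpsConnected d ε t a b)
    (hbc : EpsConnected d ε t b c) : EpsConnected d ε t a c :=
  Relation.ReflTransGen.trans hab hbc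

lemma EpsGrp.subset_of_mem_of_Icc_subset (hsymm : ∀ t a b, d t a b = d t b a) {a b x : X}
    {s z s' z' : ℝ} (hI : Set.Icc s' z' ⊆ Set.Icc s z) (hxa : x ∈ EpsGrp d ε a s z)
    (hxb : x ∈ EpsGrp d ε b s' z') : EpsGrp d ε a s z ⊆ EpsGrp d ε b s' z' :=
  fun _ hy t ht => ((hy t (hI ht)).trans ((hxa t (hI ht)).symm hsymm)).trans (hxb t ht)

lemma EpsGrp.disjoint_or_subset_or_superset (hsymm : ∀ t a b, d t a b = d t b a) (a b : X)
    (s s' z : ℝ) :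
    Disjoint (EpsGrp d ε a s z) (EpsGrp d ε b s' z) ∨ EpsGrp d ε a s z ⊆ EpsGrp d ε b s' z ∨
      EpsGrp d ε b s' z ⊆ EpsGrp d ε a s z := by
  refine or_iff_not_imp_left.2 fun hdis => ?_
  obtain ⟨x, hxa, hxb⟩ := Set.not_disjoint_iff.1 hdis
  rcases le_total s s' with h | h
  · exact .inl (subset_of_mem_of_Icc_subset hsymm (Set.Icc_subset_Icc_left h) hxa hxb)
  · exact .inr (subset_of_mem_of_Icc_subset hsymm (Set.Icc_subset_Icc_left h) hxb hxa)

end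

theorem groups_laminar_general {X : Type*} (d : ℝ → X → X → ℝ)
    (hsymm : ∀ t a b, d t a b = d t b a)
    (ε : ℝ) (m : ℕ) (G : Fin m → Set X) (a : Fin m → X)
    (s : Fin m → ℝ) (z : ℝ)
    (hGrp : ∀ i, G i = EpsGrp d ε (a i) (s i) z) :
    ∀ i j : Fin m, Disjoint (G i) (G j) ∨ G i ⊆ G j ∨ G j ⊆ G i := by
  intro i j
  rw [hGrp i, hGrp j]
  exact EpsGrp.disjoint_or_subset_or_superset hsymm (a i) (a j) (s i) (s j) z

theorem groups_laminar {X : Type*} [Fintype X] (d : ℝ → X → X → ℝ)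
    (hsymm : ∀ t a b, d t a b = d t b a) (hrefl : ∀ t a, d t a a = 0)
    (ε : ℝ) (hε : 0 ≤ ε) (m : ℕ) (G : Fin m → Set X) (a : Fin m → X)
    (s : Fin m → ℝ) (z : ℝ) (hsz : ∀ i, s i ≤ z)
    (hGrp : ∀ i, G i = EpsGrp d ε (a i) (s i) z) (hne : ∀ i, (G i).Nonempty) :
    ∀ i j : Fin m, Disjoint (G i) (G j) ∨ G i ⊆ G j ∨ G j ⊆ G i :=
  groups_laminar_general d hsymm ε m G a s z hGrp
end
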